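/- Let G be a finite group such that for every normal subgroup M of G for which the quotient G/M is subdirectly irreducible, G/M is abelian or G/M satisfies (C8). Then the commutator subgroup ⁅G, G⁆ and the center Z(G) satisfy ⁅G, G⁆ ⊓ Z(G) = ⊥ and ⁅G, G⁆ ⊔ Z(G) = ⊤; moreover G/⁅G, G⁆ is abelian and G/Z(G) satisfies (C8). -/

import Mathlib

/-!
Let `A` and `C` be the intersections of the kernels of the subdirectly irreducible quotients of
`G` that are abelian, resp. satisfy (C8). Every element `g ≠ 1` survives in some subdirectly
irreducible quotient (take a normal subgroup maximal among those avoiding `g`), so `A ⊓ C = ⊥`.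
As `⁅G, G⁆ ≤ A`, also `⁅G, C⁆ ≤ A ⊓ C = ⊥`, i.e. `C ≤ Z(G)`. Since (C8) is preserved by finite
subdirect products, `G ⧸ C` satisfies (C8); its center is then trivial, so `Z(G) ≤ C`. Hence
`C = Z(G)`, and the four claims are read off from `A ⊓ C = ⊥` and (C8) for `G ⧸ Z(G)`.
-/

/-- The quotient `G/M` is subdirectly irreducible: the intersection of all normal subgroups
of `G` strictly containing `M` strictly contains `M`. -/
def QuotSubdirectlyIrreducible {G : Type*} [Group G] (M : Subgroup G) : Prop :=
  M < sInf {X : Subgroup G | X.Normal ∧ M < X}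

/-- A group `Q` satisfies (C8) if `⁅Q, X⁆ = X` for every normal subgroup `X` of `Q`. -/
def IsC8 (Q : Type*) [Group Q] : Prop :=
  ∀ X : Subgroup Q, X.Normal → ⁅(⊤ : Subgroup Q), X⁆ = X

/-- The quotient `G/M` is abelian. -/
def QuotAbelian {G : Type*} [Group G] (M : Subgroup G) (hM : M.Normal) : Prop :=
  haveI := hM
  ∀ x y : G ⧸ M, x * y = y * x

/-- The quotient `G/M` satisfies (C8). -/
def QuotC8 {G : Type*} [Group G] (M : Subgroup G) (hM : M.Normal) : Prop :=
  haveI := hM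
  IsC8 (G ⧸ M)

namespace Subgroup

variable {G : Type*} [Group G]

theorem sup_inf_assoc_of_le_of_normal {H K : Subgroup G} [H.Normal] (L : Subgroup G)
    (h : H ≤ K) : (H ⊔ L) ⊓ K = H ⊔ L ⊓ K := by
  refine le_antisymm (fun x ⟨hxHL, hxK⟩ => ?_) (sup_le (le_inf le_sup_left h)
    (inf_le_inf_right _ le_sup_right))
  obtain ⟨y, hy, z, hz, rfl⟩ := mem_sup_of_normal_left.1 hxHL
  have hzK : z ∈ K := by simpa using K.mul_mem (K.inv_mem (h hy)) hxK
  exact mul_mem_sup hy ⟨hz, hzK⟩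

theorem map_commutator_top_of_surjective {G' : Type*} [Group G'] {f : G →* G'}
    (hf : Function.Surjective f) (X : Subgroup G) :
    map f ⁅(⊤ : Subgroup G), X⁆ = ⁅(⊤ : Subgroup G'), map f X⁆ := by
  rw [map_commutator, map_top_of_surjective f hf]

theorem commutator_top_center : ⁅(⊤ : Subgroup G), center G⁆ = ⊥ := by
  rw [commutator_comm, commutator_eq_bot_iff_le_centralizer, coe_top, centralizer_univ]

theorem normal_sInf {S : Set (Subgroup G)} (h : ∀ K ∈ S, K.Normal) : (sInf S).Normal :=
  sInf_eq_iInf' S ▸ normal_iInf_normal fun K => h K K.2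

theorem le_center_of_commutator_le_of_inf_eq_bot {A C : Subgroup G} [C.Normal]
    (hA : _root_.commutator G ≤ A) (h : A ⊓ C = ⊥) : C ≤ center G := by
  have hbot : ⁅C, (⊤ : Subgroup G)⁆ = ⊥ := by
    rw [commutator_comm, eq_bot_iff, ← h]
    exact le_inf ((commutator_mono le_rfl le_top).trans hA) (commutator_le_right _ _)
  rwa [commutator_eq_bot_iff_le_centralizer, coe_top, centralizer_univ] at hbot

end Subgroup

open Subgroup

section C8

variable {G : Type*} [Group G]

/-- `G ⧸ K` satisfies (C8), stated inside `G` so that quotients by different kernels can be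
compared. -/
def IsC8Modulo (K : Subgroup G) : Prop :=
  ∀ X : Subgroup G, X.Normal → X ≤ ⁅(⊤ : Subgroup G), X⁆ ⊔ K

theorem quotC8_iff_isC8Modulo {K : Subgroup G} (hK : K.Normal) :
    QuotC8 K hK ↔ IsC8Modulo K := by
  have hπ := QuotientGroup.mk'_surjective K
  constructor
  · intro h X hX
    have hcomm := h (X.map (QuotientGroup.mk' K)) (hX.map _ hπ)
    rw [← map_commutator_top_of_surjective hπ] at hcomm
    calc X ≤ (X.map (QuotientGroup.mk' K)).comap (QuotientGroup.mk' K) := le_comap_map _ X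
      _ = ⁅(⊤ : Subgroup G), X⁆ ⊔ K := by rw [← hcomm, comap_map_eq, QuotientGroup.ker_mk']
  · intro h Xbar hXbar
    refine le_antisymm (commutator_le_right _ _) ?_
    have hK : K.map (QuotientGroup.mk' K) = ⊥ := by
      rw [Subgroup.map_eq_bot_iff, QuotientGroup.ker_mk']
    calc Xbar = (Xbar.comap (QuotientGroup.mk' K)).map (QuotientGroup.mk' K) :=
          (map_comap_eq_self_of_surjective hπ Xbar).symm
      _ ≤ (⁅(⊤ : Subgroup G), Xbar.comap (QuotientGroup.mk' K)⁆ ⊔ K).map (QuotientGroup.mk' K) :=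
          map_mono (h _ (hXbar.comap _))
      _ = ⁅(⊤ : Subgroup (G ⧸ K)), Xbar⁆ := by
          rw [Subgroup.map_sup, hK, sup_bot_eq, map_commutator_top_of_surjective hπ,
            map_comap_eq_self_of_surjective hπ]

theorem isC8Modulo_top : IsC8Modulo (⊤ : Subgroup G) :=
  fun _ _ => le_sup_of_le_right le_top

theorem IsC8Modulo.center_le {K : Subgroup G} (h : IsC8Modulo K) : center G ≤ K := by
  simpa [commutator_top_center] using h (center G) inferInstance

-- (C8) passes to subdirect products: `X` lies in `⁅⊤, X⁆ ⊔ (X ⊓ K₁)` by the Dedekind law, and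
-- applying (C8) modulo `K₂` to `X ⊓ K₁ ≤ K₁` gives `X ⊓ K₁ ≤ ⁅⊤, X⁆ ⊔ K₁ ⊓ K₂`.
theorem IsC8Modulo.inf {K₁ K₂ : Subgroup G} [K₁.Normal] (h₁ : IsC8Modulo K₁)
    (h₂ : IsC8Modulo K₂) : IsC8Modulo (K₁ ⊓ K₂) := by
  intro X hX
  have hXK₁ : X ⊓ K₁ ≤ ⁅(⊤ : Subgroup G), X⁆ ⊔ K₁ ⊓ K₂ :=
    calc X ⊓ K₁ ≤ (⁅(⊤ : Subgroup G), X ⊓ K₁⁆ ⊔ K₂) ⊓ K₁ := le_inf (h₂ _ inferInstance) inf_le_right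
      _ = ⁅(⊤ : Subgroup G), X ⊓ K₁⁆ ⊔ K₂ ⊓ K₁ :=
          sup_inf_assoc_of_le_of_normal _ ((commutator_le_right _ _).trans inf_le_right)
      _ ≤ ⁅(⊤ : Subgroup G), X⁆ ⊔ K₁ ⊓ K₂ := by
          rw [inf_comm K₂]; exact sup_le_sup_right (commutator_mono le_rfl inf_le_left) _
  calc X ≤ (⁅(⊤ : Subgroup G), X⁆ ⊔ K₁) ⊓ X := le_inf (h₁ X hX) le_rfl
    _ = ⁅(⊤ : Subgroup G), X⁆ ⊔ K₁ ⊓ X :=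
        sup_inf_assoc_of_le_of_normal _ (commutator_le_right _ _)
    _ ≤ ⁅(⊤ : Subgroup G), X⁆ ⊔ K₁ ⊓ K₂ := sup_le le_sup_left (inf_comm K₁ X ▸ hXK₁)

theorem IsC8Modulo.sInf {S : Set (Subgroup G)} (hS : S.Finite)
    (h : ∀ K ∈ S, K.Normal ∧ IsC8Modulo K) : IsC8Modulo (sInf S) := by
  induction S, hS using Set.Finite.induction_on with
  | empty => simpa using isC8Modulo_top
  | @insert K S _ _ ih =>
    obtain ⟨hK, hKC8⟩ := h K (Set.mem_insert _ _)
    rw [sInf_insert]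
    exact hKC8.inf (ih fun L hL => h L (Set.mem_insert_of_mem _ hL))

end C8

section SubdirectlyIrreducible

variable {G : Type*} [Group G]

theorem sInf_quotSubdirectlyIrreducible_eq_bot [Finite G] :
    sInf {M : Subgroup G | M.Normal ∧ QuotSubdirectlyIrreducible M} = ⊥ := by
  refine eq_bot_iff.2 fun g hg => mem_bot.2 (by_contra fun hg1 => ?_)
  obtain ⟨M, ⟨hMn, hgM⟩, hmax⟩ := Set.Finite.exists_maximalFor id
    {M : Subgroup G | M.Normal ∧ g ∉ M} (Set.toFinite _) ⟨⊥, inferInstance, hg1⟩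
  have hg_above : g ∈ sInf {X : Subgroup G | X.Normal ∧ M < X} :=
    mem_sInf.2 fun X ⟨hXn, hMX⟩ => by_contra fun hgX =>
      hMX.ne (le_antisymm hMX.le (hmax ⟨hXn, hgX⟩ hMX.le))
  have hSI : QuotSubdirectlyIrreducible M :=
    lt_of_le_of_ne (le_sInf fun X hX => hX.2.le) fun h => hgM (h ▸ hg_above)
  exact hgM (mem_sInf.1 hg M ⟨hMn, hSI⟩)

theorem QuotAbelian.commutator_le {M : Subgroup G} {hM : M.Normal} (h : QuotAbelian M hM) :
    commutator G ≤ M := by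
  let _ : CommGroup (G ⧸ M) := { QuotientGroup.Quotient.group M with mul_comm := h }
  simpa using Abelianization.commutator_subset_ker (QuotientGroup.mk' M)

end SubdirectlyIrreducible

/-- Let `G` be a finite group in which every subdirectly irreducible quotient is abelian or
satisfies (C8). Then the commutator subgroup `⁅G, G⁆` and the center `Z(G)` are
complementary normal subgroups, `G/⁅G, G⁆` is abelian, and `G/Z(G)` satisfies (C8). -/
theorem abelian_C8_factorization
    {G : Type*} [Group G] [Finite G]
    (hSI : ∀ (M : Subgroup G) (hM : M.Normal), QuotSubdirectlyIrreducible M →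
      QuotAbelian M hM ∨ QuotC8 M hM) :
    commutator G ⊓ Subgroup.center G = ⊥ ∧
    commutator G ⊔ Subgroup.center G = ⊤ ∧
    (∀ x y : G ⧸ commutator G, x * y = y * x) ∧
    IsC8 (G ⧸ Subgroup.center G) := by
  set A := sInf {M : Subgroup G | ∃ hM, QuotSubdirectlyIrreducible M ∧ QuotAbelian M hM}
  set C := sInf {M : Subgroup G | ∃ hM, QuotSubdirectlyIrreducible M ∧ QuotC8 M hM}
  have hDA : commutator G ≤ A := le_sInf fun M ⟨_, _, hab⟩ => hab.commutator_le
  have hAC : A ⊓ C = ⊥ := by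
    refine eq_bot_iff.2 ((le_sInf ?_).trans sInf_quotSubdirectlyIrreducible_eq_bot.le)
    rintro M ⟨hM, hMSI⟩
    rcases hSI M hM hMSI with hab | hC8
    · exact inf_le_left.trans (sInf_le ⟨hM, hMSI, hab⟩)
    · exact inf_le_right.trans (sInf_le ⟨hM, hMSI, hC8⟩)
  have hC : IsC8Modulo C := IsC8Modulo.sInf (Set.toFinite _)
    fun M ⟨hM, _, hC8⟩ => ⟨hM, (quotC8_iff_isC8Modulo hM).1 hC8⟩
  have hCn : C.Normal := normal_sInf fun _ ⟨hM, _⟩ => hM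
  have hCZ : C = center G := le_antisymm (le_center_of_commutator_le_of_inf_eq_bot hDA hAC)
    hC.center_le
  rw [hCZ] at hAC hC
  refine ⟨eq_bot_iff.2 (hAC ▸ inf_le_inf_right _ hDA), eq_top_iff.2 (hC ⊤ inferInstance),
    mul_comm (G := Abelianization G), (quotC8_iff_isC8Modulo inferInstance).2 hC⟩
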